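/- Let r, s > 1 with 1/r + 1/s = 1 and consider the T-layer transformer defined recursively by X_⋆^{(0)} = X ∈ ℝ^{L×d}; X^{(t)} = ffn(X_⋆^{(t)}; A^{(t)}); X_⋆^{(t+1)} = mha(X^{(t)}; W^{(t)}) + X^{(t)}, for t = 0, …, T−1, where the multihead attention uses the Gaussian RBF kernel. Suppose for each layer t and head i ∈ [h]: ‖(A^{x,(t)})ᵀ‖_r ≤ α^{x,(t)}, ‖(A^{σ,(t)})ᵀ‖_r ≤ α^{σ,(t)}, and ‖(W_i^{v,(t)})ᵀ‖_r ≤ ω_i^{v,(t)}. Set α̃^{(t)} = 1 + α^{x,(t)}α^{σ,(t)}, ω̃^{v,(t)} = 1 + Σ_{i=1}^h ω_i^{v,(t)}, and R^{(t)} = ‖Xᵀ‖_{r,∞} · ∏_{τ=0}^{t−1} ω̃^{v,(τ)} α̃^{(τ)}. Then for all t = 0, …, T−1: ‖(X_⋆^{(t)})ᵀ‖_{r,∞} ≤ R^{(t)} and ‖(X^{(t)})ᵀ‖_{r,∞} ≤ α̃^{(t)} R^{(t)}. -/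

import Mathlib

open Matrix

/-- The vector `ℓ_r`-norm on `Fin m → ℝ`. -/
noncomputable def lrNorm {m : ℕ} (r : ℝ) (v : Fin m → ℝ) : ℝ :=
  (∑ i, |v i| ^ r) ^ (1 / r)

/-- The matrix `(r,s)`-norm: the `ℓ_s`-norm of the `ℓ_r`-norms of the columns. -/
noncomputable def matNormRS {m n : ℕ} (r s : ℝ) (M : Matrix (Fin m) (Fin n) ℝ) : ℝ :=
  (∑ j, lrNorm r (fun i => M i j) ^ s) ^ (1 / s)

/-- The matrix `(r,∞)`-norm: maximum of the `ℓ_r`-norms of the columns. -/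
noncomputable def matNormRInf {m n : ℕ} (r : ℝ) (M : Matrix (Fin m) (Fin n) ℝ) : ℝ :=
  ⨆ j, lrNorm r (fun i => M i j)

/-- The `(r,r)`-operator norm `sup_{u ≠ 0} ‖Mu‖_r / ‖u‖_r` (with the convention `0/0 = 0`). -/
noncomputable def matOpNorm {m n : ℕ} (r : ℝ) (M : Matrix (Fin m) (Fin n) ℝ) : ℝ :=
  ⨆ u : Fin n → ℝ, lrNorm r (M.mulVec u) / lrNorm r u

/-- The Gaussian RBF kernel `exp(−‖q−k‖₂²/(2σ²))`. -/
noncomputable def rbf {dp : ℕ} (σ : ℝ) (q k : Fin dp → ℝ) : ℝ :=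
  Real.exp (-(∑ i, (q i - k i) ^ 2) / (2 * σ ^ 2))

/-- Sequence-to-sequence softmax attention: the `ℓ`-th row is `Vᵀ p^ℓ` where
`p^ℓ_m = 𝔎_RBF(k^m, q^ℓ)/Σ_{m'} 𝔎_RBF(k^{m'}, q^ℓ)`. -/
noncomputable def attnSM {L dp d : ℕ} (σ : ℝ) (Q K : Matrix (Fin L) (Fin dp) ℝ)
    (V : Matrix (Fin L) (Fin d) ℝ) : Matrix (Fin L) (Fin d) ℝ :=
  Matrix.of fun ℓ j => ∑ m, (rbf σ (K m) (Q ℓ) / ∑ m', rbf σ (K m') (Q ℓ)) * V m j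

/-- Multihead attention `mha(X; W) = Σ_{i=1}^h attn_SM(XW_i^q, XW_i^k, XW_i^v)`. -/
noncomputable def mha {L d dp h : ℕ} (σ : ℝ)
    (Wq Wk : Fin h → Matrix (Fin d) (Fin dp) ℝ)
    (Wv : Fin h → Matrix (Fin d) (Fin d) ℝ)
    (X : Matrix (Fin L) (Fin d) ℝ) : Matrix (Fin L) (Fin d) ℝ :=
  ∑ i, attnSM σ (X * Wq i) (X * Wk i) (X * Wv i)

/-- The two-layer feedforward network with skip connection
`ffn(X; A) = ReLU(XA^x)A^σ + X`. -/
noncomputable def ffn {L d dσ : ℕ} (X : Matrix (Fin L) (Fin d) ℝ)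
    (A : Matrix (Fin d) (Fin dσ) ℝ × Matrix (Fin dσ) (Fin d) ℝ) :
    Matrix (Fin L) (Fin d) ℝ :=
  ((X * A.1).map fun t => max t 0) * A.2 + X


section Helpers

variable {m n : ℕ} {r : ℝ}

lemma lrNorm_nonneg (v : Fin m → ℝ) : 0 ≤ lrNorm r v :=
  Real.rpow_nonneg (Finset.sum_nonneg fun i _ => Real.rpow_nonneg (abs_nonneg _) r) _

lemma lrNorm_zero (hr : 0 < r) : lrNorm r (fun _ : Fin m => (0:ℝ)) = 0 := by
  simp [lrNorm, Real.zero_rpow hr.ne', Real.zero_rpow (inv_ne_zero hr.ne'), one_div]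

lemma lrNorm_mono (hr : 0 < r) {u v : Fin m → ℝ} (h : ∀ i, |u i| ≤ |v i|) :
    lrNorm r u ≤ lrNorm r v := by
  refine Real.rpow_le_rpow (Finset.sum_nonneg fun i _ => Real.rpow_nonneg (abs_nonneg _) r)
    (Finset.sum_le_sum fun i _ => Real.rpow_le_rpow (abs_nonneg _) (h i) hr.le)
    (by positivity)

lemma lrNorm_add_le (hr : 1 ≤ r) (u v : Fin m → ℝ) :
    lrNorm r (fun i => u i + v i) ≤ lrNorm r u + lrNorm r v := by
  have h1 : lrNorm r (fun i => u i + v i) ≤ lrNorm r (fun i => |u i| + |v i|) := by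
    refine lrNorm_mono (by linarith) fun i => ?_
    rw [abs_of_nonneg (by positivity : (0:ℝ) ≤ |u i| + |v i|)]
    exact abs_add_le _ _
  refine h1.trans ?_
  have h2 := Real.Lp_add_le_of_nonneg (s := Finset.univ) (f := fun i => |u i|)
    (g := fun i => |v i|) (p := r) hr (fun i _ => abs_nonneg _) (fun i _ => abs_nonneg _)
  have habs : ∀ i : Fin m, abs (|u i| + |v i|) = |u i| + |v i| :=
    fun i => abs_of_nonneg (by positivity)
  simp only [lrNorm, habs, abs_abs]
  exact h2

lemma lrNorm_smul (hr : 0 < r) (c : ℝ) (v : Fin m → ℝ) :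
    lrNorm r (fun i => c * v i) = |c| * lrNorm r v := by
  have h1 : ∀ i, |c * v i| ^ r = |c| ^ r * |v i| ^ r := fun i => by
    rw [abs_mul, Real.mul_rpow (abs_nonneg _) (abs_nonneg _)]
  unfold lrNorm
  rw [Finset.sum_congr rfl (fun i _ => h1 i), ← Finset.mul_sum,
    Real.mul_rpow (by positivity) (Finset.sum_nonneg fun i _ => by positivity),
    ← Real.rpow_mul (abs_nonneg c), mul_one_div_cancel hr.ne', Real.rpow_one]

lemma lrNorm_sum_le (hr : 1 ≤ r) {ι : Type*} (s : Finset ι) (f : ι → Fin m → ℝ) :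
    lrNorm r (fun j => ∑ a ∈ s, f a j) ≤ ∑ a ∈ s, lrNorm r (f a) := by
  classical
  induction s using Finset.induction with
  | empty => simp [lrNorm_zero (by linarith : (0:ℝ) < r)]
  | insert a s hnot ih =>
    simp only [Finset.sum_insert hnot]
    exact (lrNorm_add_le hr _ _).trans (add_le_add_right ih _)

lemma abs_le_lrNorm (hr : 0 < r) (v : Fin m → ℝ) (i : Fin m) : |v i| ≤ lrNorm r v := by
  have h1 : |v i| ^ r ≤ ∑ j, |v j| ^ r :=
    Finset.single_le_sum (fun j _ => Real.rpow_nonneg (abs_nonneg _) r) (Finset.mem_univ i)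
  calc |v i| = (|v i| ^ r) ^ (1/r) := by
        rw [← Real.rpow_mul (abs_nonneg _), mul_one_div_cancel hr.ne', Real.rpow_one]
    _ ≤ (∑ j, |v j| ^ r) ^ (1/r) := Real.rpow_le_rpow (by positivity) h1 (by positivity)

lemma lrNorm_mulVec_le (hr : 0 < r) (M : Matrix (Fin m) (Fin n) ℝ) (u : Fin n → ℝ) :
    lrNorm r (M.mulVec u) ≤ lrNorm r (fun i => ∑ j, |M i j|) * lrNorm r u := by
  have key : ∀ i, |M.mulVec u i| ≤ (∑ j, |M i j|) * lrNorm r u := by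
    intro i
    calc |M.mulVec u i| ≤ ∑ j, |M i j * u j| := by
          simpa [Matrix.mulVec, dotProduct] using Finset.abs_sum_le_sum_abs (fun j => M i j * u j) Finset.univ
      _ ≤ ∑ j, |M i j| * lrNorm r u := Finset.sum_le_sum fun j _ => by
          rw [abs_mul]
          exact mul_le_mul_of_nonneg_left (abs_le_lrNorm hr u j) (abs_nonneg _)
      _ = (∑ j, |M i j|) * lrNorm r u := by rw [Finset.sum_mul]
  calc lrNorm r (M.mulVec u)
      ≤ lrNorm r (fun i => (∑ j, |M i j|) * lrNorm r u) := by
        refine lrNorm_mono hr fun i => (key i).trans (le_abs_self _)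
    _ = lrNorm r (fun i => lrNorm r u * ∑ j, |M i j|) := by
        congr 1; funext i; ring
    _ = |lrNorm r u| * lrNorm r (fun i => ∑ j, |M i j|) := lrNorm_smul hr _ _
    _ = lrNorm r (fun i => ∑ j, |M i j|) * lrNorm r u := by
        rw [abs_of_nonneg (lrNorm_nonneg u)]; ring

lemma matOpNorm_nonneg (M : Matrix (Fin m) (Fin n) ℝ) : 0 ≤ matOpNorm r M :=
  Real.iSup_nonneg fun u => div_nonneg (lrNorm_nonneg _) (lrNorm_nonneg _)

lemma lrNorm_mulVec_le_opNorm (hr : 0 < r) (M : Matrix (Fin m) (Fin n) ℝ) (u : Fin n → ℝ) :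
    lrNorm r (M.mulVec u) ≤ matOpNorm r M * lrNorm r u := by
  set C := lrNorm r (fun i => ∑ j, |M i j|) with hC
  have hCnn : 0 ≤ C := lrNorm_nonneg _
  have hbdd : BddAbove (Set.range fun u : Fin n → ℝ => lrNorm r (M.mulVec u) / lrNorm r u) := by
    refine ⟨C, Set.forall_mem_range.2 fun w => ?_⟩
    rcases eq_or_lt_of_le (lrNorm_nonneg w) with h0 | hpos
    · rw [← h0, div_zero]; exact hCnn
    · exact (div_le_iff₀ hpos).2 (lrNorm_mulVec_le hr M w)
  rcases eq_or_lt_of_le (lrNorm_nonneg u) with h0 | hpos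
  · rw [← h0, mul_zero]
    have := lrNorm_mulVec_le hr M u
    rw [← h0, mul_zero] at this
    exact this
  · have h1 : lrNorm r (M.mulVec u) / lrNorm r u ≤ matOpNorm r M := le_ciSup hbdd u
    exact (div_le_iff₀ hpos).1 h1

lemma matNormRInf_nonneg (M : Matrix (Fin m) (Fin n) ℝ) : 0 ≤ matNormRInf r M :=
  Real.iSup_nonneg fun j => lrNorm_nonneg _

lemma lrNorm_row_le (M : Matrix (Fin m) (Fin n) ℝ) (i : Fin m) :
    lrNorm r (M i) ≤ matNormRInf r Mᵀ := by
  have : lrNorm r (M i) = lrNorm r (fun j => Mᵀ j i) := rfl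
  rw [this]
  unfold matNormRInf
  exact le_ciSup (f := fun j : Fin m => lrNorm r (fun k => Mᵀ k j))
    (Set.Finite.bddAbove (Set.finite_range _)) i

end Helpers


section MatrixHelpers

variable {r : ℝ} {L d d' : ℕ}

lemma rowSup_le {M : Matrix (Fin L) (Fin d) ℝ} {B : ℝ} (hB : 0 ≤ B)
    (h : ∀ ℓ, lrNorm r (M ℓ) ≤ B) : matNormRInf r Mᵀ ≤ B :=
  Real.iSup_le (fun ℓ => h ℓ) hB

lemma rowSup_add_le (hr : 1 ≤ r) (M N : Matrix (Fin L) (Fin d) ℝ) :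
    matNormRInf r (M + N)ᵀ ≤ matNormRInf r Mᵀ + matNormRInf r Nᵀ := by
  refine rowSup_le (add_nonneg (matNormRInf_nonneg _) (matNormRInf_nonneg _)) fun ℓ => ?_
  have hrow : (M + N) ℓ = fun i => M ℓ i + N ℓ i := rfl
  rw [hrow]
  exact (lrNorm_add_le hr _ _).trans (add_le_add (lrNorm_row_le M ℓ) (lrNorm_row_le N ℓ))

lemma rowSup_mul_le (hr : 0 < r) (M : Matrix (Fin L) (Fin d) ℝ)
    (N : Matrix (Fin d) (Fin d') ℝ) :
    matNormRInf r (M * N)ᵀ ≤ matOpNorm r Nᵀ * matNormRInf r Mᵀ := by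
  refine rowSup_le (mul_nonneg (matOpNorm_nonneg _) (matNormRInf_nonneg _)) fun ℓ => ?_
  have hrow : (M * N) ℓ = Nᵀ.mulVec (M ℓ) := by
    funext j
    simp [Matrix.mul_apply, Matrix.mulVec, dotProduct, mul_comm]
  rw [hrow]
  exact (lrNorm_mulVec_le_opNorm hr _ _).trans
    (mul_le_mul_of_nonneg_left (lrNorm_row_le M ℓ) (matOpNorm_nonneg _))

lemma rowSup_relu_le (hr : 0 < r) (M : Matrix (Fin L) (Fin d) ℝ) :
    matNormRInf r ((M.map fun t => max t 0))ᵀ ≤ matNormRInf r Mᵀ := by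
  refine rowSup_le (matNormRInf_nonneg _) fun ℓ => ?_
  refine (lrNorm_mono hr fun i => ?_).trans (lrNorm_row_le M ℓ)
  show |max (M ℓ i) 0| ≤ |M ℓ i|
  rw [abs_of_nonneg (le_max_right _ _)]
  exact max_le (le_abs_self _) (abs_nonneg _)

lemma rowSup_attn_le (hr : 1 ≤ r) {dp : ℕ} (σ : ℝ) (Q K : Matrix (Fin L) (Fin dp) ℝ)
    (V : Matrix (Fin L) (Fin d) ℝ) :
    matNormRInf r (attnSM σ Q K V)ᵀ ≤ matNormRInf r Vᵀ := by
  refine rowSup_le (matNormRInf_nonneg _) fun ℓ => ?_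
  set p : Fin L → ℝ := fun m => rbf σ (K m) (Q ℓ) / ∑ m', rbf σ (K m') (Q ℓ) with hp
  have hpos : 0 < ∑ m', rbf σ (K m') (Q ℓ) := by
    refine Finset.sum_pos (fun m _ => ?_) ⟨ℓ, Finset.mem_univ ℓ⟩
    unfold rbf
    exact Real.exp_pos _
  have hpn : ∀ m, 0 ≤ p m := fun m => div_nonneg (by unfold rbf; positivity) hpos.le
  have hps : ∑ m, p m = 1 := by
    rw [hp, ← Finset.sum_div]
    exact div_self hpos.ne'
  have hrow : (attnSM σ Q K V) ℓ = fun j => ∑ m, p m * V m j := rfl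
  rw [hrow]
  calc lrNorm r (fun j => ∑ m, p m * V m j)
      ≤ ∑ m, lrNorm r (fun j => p m * V m j) := lrNorm_sum_le hr _ _
    _ = ∑ m, p m * lrNorm r (V m) := by
        refine Finset.sum_congr rfl fun m _ => ?_
        rw [lrNorm_smul (lt_of_lt_of_le one_pos hr), abs_of_nonneg (hpn m)]
    _ ≤ ∑ m, p m * matNormRInf r Vᵀ := Finset.sum_le_sum fun m _ =>
        mul_le_mul_of_nonneg_left (lrNorm_row_le V m) (hpn m)
    _ = matNormRInf r Vᵀ := by rw [← Finset.sum_mul, hps, one_mul]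

lemma rowSup_matsum_le (hr : 1 ≤ r) {h : ℕ} (F : Fin h → Matrix (Fin L) (Fin d) ℝ) :
    matNormRInf r (∑ i, F i)ᵀ ≤ ∑ i, matNormRInf r (F i)ᵀ := by
  refine rowSup_le (Finset.sum_nonneg fun i _ => matNormRInf_nonneg _) fun ℓ => ?_
  have hrow : (∑ i, F i) ℓ = fun j => ∑ i, F i ℓ j := by
    funext j
    exact Matrix.sum_apply ℓ j Finset.univ F
  rw [hrow]
  exact (lrNorm_sum_le hr _ _).trans (Finset.sum_le_sum fun i _ => lrNorm_row_le (F i) ℓ)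

end MatrixHelpers

/-- Inter-layer magnitude bounds for the `T`-layer transformer. -/
theorem transformer_magnitude
    {L dp h dσ d T : ℕ} (r s σ : ℝ) (hr : 1 < r) (hs : 1 < s) (hrs : 1 / r + 1 / s = 1)
    (hd : d = dp * h) (hσ : 0 < σ)
    (X : Matrix (Fin L) (Fin d) ℝ)
    -- per-layer parameters
    (A : ℕ → Matrix (Fin d) (Fin dσ) ℝ × Matrix (Fin dσ) (Fin d) ℝ)
    (Wq Wk : ℕ → Fin h → Matrix (Fin d) (Fin dp) ℝ)
    (Wv : ℕ → Fin h → Matrix (Fin d) (Fin d) ℝ)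
    -- per-layer parameter norm bounds
    (αx ασ : ℕ → ℝ) (ωv : ℕ → Fin h → ℝ)
    (hαx : ∀ t < T, matOpNorm r (A t).1ᵀ ≤ αx t)
    (hασ : ∀ t < T, matOpNorm r (A t).2ᵀ ≤ ασ t)
    (hωv : ∀ t < T, ∀ i, matOpNorm r (Wv t i)ᵀ ≤ ωv t i)
    -- the recursively defined intermediate inputs
    (Xstar X1 : ℕ → Matrix (Fin L) (Fin d) ℝ)
    (h0 : Xstar 0 = X)
    (h1 : ∀ t < T, X1 t = ffn (Xstar t) (A t))
    (h2 : ∀ t < T, Xstar (t + 1) = mha σ (Wq t) (Wk t) (Wv t) (X1 t) + X1 t) :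
    ∀ t < T,
      matNormRInf r (Xstar t)ᵀ
          ≤ matNormRInf r Xᵀ *
              ∏ τ ∈ Finset.range t, ((1 + ∑ i, ωv τ i) * (1 + αx τ * ασ τ))
        ∧
      matNormRInf r (X1 t)ᵀ
          ≤ (1 + αx t * ασ t) *
              (matNormRInf r Xᵀ *
                ∏ τ ∈ Finset.range t, ((1 + ∑ i, ωv τ i) * (1 + αx τ * ασ τ))) := by
  have hr0 : 0 < r := lt_trans one_pos hr
  have hr1 : 1 ≤ r := hr.le
  -- feedforward bound
  have bound2 : ∀ t < T, ∀ Rt : ℝ, 0 ≤ Rt → matNormRInf r (Xstar t)ᵀ ≤ Rt →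
      matNormRInf r (X1 t)ᵀ ≤ (1 + αx t * ασ t) * Rt := by
    intro t ht Rt hRt hXs
    have hαx' : 0 ≤ αx t := (matOpNorm_nonneg _).trans (hαx t ht)
    have hασ' : 0 ≤ ασ t := (matOpNorm_nonneg _).trans (hασ t ht)
    have c1 : matNormRInf r ((Xstar t * (A t).1).map fun u => max u 0)ᵀ ≤ αx t * Rt :=
      (rowSup_relu_le hr0 _).trans ((rowSup_mul_le hr0 _ _).trans
        (mul_le_mul (hαx t ht) hXs (matNormRInf_nonneg _) hαx'))
    have c2 : matNormRInf r (((Xstar t * (A t).1).map fun u => max u 0) * (A t).2)ᵀ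
        ≤ ασ t * (αx t * Rt) :=
      (rowSup_mul_le hr0 _ _).trans
        (mul_le_mul (hασ t ht) c1 (matNormRInf_nonneg _) hασ')
    rw [h1 t ht]
    unfold ffn
    calc matNormRInf r ((((Xstar t * (A t).1).map fun u => max u 0) * (A t).2) + Xstar t)ᵀ
        ≤ matNormRInf r (((Xstar t * (A t).1).map fun u => max u 0) * (A t).2)ᵀ
            + matNormRInf r (Xstar t)ᵀ := rowSup_add_le hr1 _ _
      _ ≤ ασ t * (αx t * Rt) + Rt := add_le_add c2 hXs
      _ = (1 + αx t * ασ t) * Rt := by ring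
  -- nonnegativity of the products
  have hprod : ∀ t ≤ T, 0 ≤ matNormRInf r Xᵀ *
      ∏ τ ∈ Finset.range t, ((1 + ∑ i, ωv τ i) * (1 + αx τ * ασ τ)) := by
    intro t ht
    refine mul_nonneg (matNormRInf_nonneg _) (Finset.prod_nonneg fun τ hτ => ?_)
    have hτT : τ < T := lt_of_lt_of_le (Finset.mem_range.1 hτ) ht
    have h1' : 0 ≤ ∑ i, ωv τ i :=
      Finset.sum_nonneg fun i _ => (matOpNorm_nonneg _).trans (hωv τ hτT i)
    have h2' : 0 ≤ αx τ := (matOpNorm_nonneg _).trans (hαx τ hτT)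
    have h3' : 0 ≤ ασ τ := (matOpNorm_nonneg _).trans (hασ τ hτT)
    have : 0 ≤ αx τ * ασ τ := mul_nonneg h2' h3'
    nlinarith
  -- main induction
  have key : ∀ t, t < T → matNormRInf r (Xstar t)ᵀ ≤ matNormRInf r Xᵀ *
      ∏ τ ∈ Finset.range t, ((1 + ∑ i, ωv τ i) * (1 + αx τ * ασ τ)) := by
    intro t
    induction t with
    | zero => intro _; rw [h0]; simp
    | succ t ih =>
      intro ht
      have ht' : t < T := Nat.lt_of_succ_lt ht
      have hRt := hprod t (le_of_lt ht')
      have hX1 := bound2 t ht' _ hRt (ih ht')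
      have hωnn : 0 ≤ ∑ i, ωv t i :=
        Finset.sum_nonneg fun i _ => (matOpNorm_nonneg _).trans (hωv t ht' i)
      have hm : matNormRInf r (mha σ (Wq t) (Wk t) (Wv t) (X1 t))ᵀ
          ≤ (∑ i, ωv t i) * matNormRInf r (X1 t)ᵀ := by
        unfold mha
        refine (rowSup_matsum_le hr1 _).trans ?_
        rw [Finset.sum_mul]
        refine Finset.sum_le_sum fun i _ => ?_
        refine (rowSup_attn_le hr1 σ _ _ _).trans ((rowSup_mul_le hr0 _ _).trans ?_)
        exact mul_le_mul (hωv t ht' i) le_rfl (matNormRInf_nonneg _)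
          ((matOpNorm_nonneg _).trans (hωv t ht' i))
      rw [h2 t ht']
      calc matNormRInf r (mha σ (Wq t) (Wk t) (Wv t) (X1 t) + X1 t)ᵀ
          ≤ matNormRInf r (mha σ (Wq t) (Wk t) (Wv t) (X1 t))ᵀ
              + matNormRInf r (X1 t)ᵀ := rowSup_add_le hr1 _ _
        _ ≤ (∑ i, ωv t i) * matNormRInf r (X1 t)ᵀ + matNormRInf r (X1 t)ᵀ :=
            add_le_add hm le_rfl
        _ = (1 + ∑ i, ωv t i) * matNormRInf r (X1 t)ᵀ := by ring
        _ ≤ (1 + ∑ i, ωv t i) * ((1 + αx t * ασ t) * (matNormRInf r Xᵀ *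
              ∏ τ ∈ Finset.range t, ((1 + ∑ i, ωv τ i) * (1 + αx τ * ασ τ)))) :=
            mul_le_mul_of_nonneg_left hX1 (by linarith)
        _ = matNormRInf r Xᵀ *
              ∏ τ ∈ Finset.range (t + 1), ((1 + ∑ i, ωv τ i) * (1 + αx τ * ασ τ)) := by
            rw [Finset.prod_range_succ]; ring
  intro t ht
  exact ⟨key t ht, bound2 t ht _ (hprod t (le_of_lt ht)) (key t ht)⟩
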